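/- (Proposition 1, equivalence of the three bound formulas with constant sensitivity parameters.) For any constants a > 0 and b > 0, the following three expressions are equal: (i) E[Z·μ1(X) + (1−Z)·μ1(X)/a] − E[Z·μ0(X)·b + (1−Z)·μ0(X)]; (ii) E[{e(X) + (1−e(X))/a}·Z·Y/e(X)] − E[{e(X)·b + 1−e(X)}·(1−Z)·Y/(1−e(X))]; (iii) E[{e(X) + (1−e(X))/a}·Z·Y/e(X) − (Z−e(X))·μ1(X)/(e(X)·a)] − E[{e(X)·b + 1−e(X)}·(1−Z)·Y/(1−e(X)) − (e(X)−Z)·μ0(X)·b/(1−e(X))]. -/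

import Mathlib

/-!
Both equalities hold arm by arm. Conditioning on `mX` turns the affine weight `c + d * Z` of the
regression formula into `c + d * e`, and turns `Z * Y` in the weighted formula into `μ₁ * e`, whose
factor `e` cancels the inverse propensity weight; so both formulas equal `∫ μ₁ * (c + d * e)`.
The augmentation terms `k * (Z - e)` with `k` measurable for `mX` have mean zero since
`E[Z - e | mX] = 0`. The control arm is the same computation with `1 - Z` and `1 - e` in place of
`Z` and `e`.
-/

open MeasureTheory

section ConditionalWeighting

variable {Ω : Type*} {m m₀ : MeasurableSpace Ω} {μ : Measure Ω} [IsFiniteMeasure μ]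

theorem integral_mul_eq_of_condExp_ae_eq (hm : m ≤ m₀) {g h k : Ω → ℝ}
    (hg : StronglyMeasurable[m] g) (hh : Integrable h μ)
    (hgh : Integrable (fun ω => g ω * h ω) μ) (hk : μ[h|m] =ᵐ[μ] k) :
    ∫ ω, g ω * h ω ∂μ = ∫ ω, g ω * k ω ∂μ := by
  rw [← integral_condExp hm]
  refine integral_congr_ae ?_
  filter_upwards [condExp_mul_of_stronglyMeasurable_left hg hgh hh, hk] with ω hpull hω
  exact hpull.trans (congrArg (g ω * ·) hω)

theorem condExp_const_add_const_mul_ae_eq (hm : m ≤ m₀) {T p : Ω → ℝ} (hT : Integrable T μ)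
    (hTp : μ[T|m] =ᵐ[μ] p) (c d : ℝ) :
    μ[fun ω => c + d * T ω|m] =ᵐ[μ] fun ω => c + d * p ω := by
  filter_upwards [condExp_add (integrable_const c) (hT.const_mul d) m, condExp_smul d T m, hTp]
    with ω hadd hsmul hω
  rw [show (fun ω => c + d * T ω) = (fun _ => c) + fun ω => d * T ω from rfl, hadd, Pi.add_apply,
    condExp_const hm, show (fun ω => d * T ω) = d • T from rfl, hsmul, Pi.smul_apply, hω,
    smul_eq_mul]

theorem integral_regression_eq_integral_ipw (hm : m ≤ m₀) {T p ν Y f g : Ω → ℝ} {c d : ℝ}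
    (hT : Integrable T μ) (hpm : Measurable[m] p) (hTp : μ[T|m] =ᵐ[μ] p)
    (hp0 : ∀ᵐ ω ∂μ, p ω ≠ 0) (hνm : Measurable[m] ν)
    (hν : (fun ω => ν ω * p ω) =ᵐ[μ] μ[fun ω => T ω * Y ω|m])
    (hTY : Integrable (fun ω => T ω * Y ω) μ) (hf : Integrable f μ) (hg : Integrable g μ)
    (hfν : ∀ ω, f ω = ν ω * (c + d * T ω))
    (hgp : ∀ ω, g ω = (c + d * p ω) / p ω * (T ω * Y ω)) :
    ∫ ω, f ω ∂μ = ∫ ω, g ω ∂μ := by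
  have hweight : StronglyMeasurable[m] fun ω => (c + d * p ω) / p ω :=
    ((measurable_const.add (hpm.const_mul d)).div hpm).stronglyMeasurable
  calc ∫ ω, f ω ∂μ = ∫ ω, ν ω * (c + d * p ω) ∂μ := by
        simp only [hfν]
        exact integral_mul_eq_of_condExp_ae_eq hm hνm.stronglyMeasurable
          ((integrable_const c).add (hT.const_mul d)) (hf.congr (ae_of_all _ hfν))
          (condExp_const_add_const_mul_ae_eq hm hT hTp c d)
    _ = ∫ ω, (c + d * p ω) / p ω * (ν ω * p ω) ∂μ :=
        integral_congr_ae (hp0.mono fun ω hω => by field_simp)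
    _ = ∫ ω, g ω ∂μ := by
        simp only [hgp]
        exact (integral_mul_eq_of_condExp_ae_eq hm hweight hTY
          (hg.congr (ae_of_all _ hgp)) hν.symm).symm

theorem integral_sub_mul_sub_condExp_eq (hm : m ≤ m₀) {T p k f g : Ω → ℝ} (hT : Integrable T μ)
    (hpm : Measurable[m] p) (hTp : μ[T|m] =ᵐ[μ] p) (hkm : Measurable[m] k)
    (hf : Integrable f μ) (hg : Integrable g μ) (hgf : ∀ ω, g ω = f ω - k ω * (T ω - p ω)) :
    ∫ ω, g ω ∂μ = ∫ ω, f ω ∂μ := by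
  have hp : Integrable p μ := integrable_condExp.congr hTp
  have hcentered : μ[fun ω => T ω - p ω|m] =ᵐ[μ] 0 := by
    filter_upwards [condExp_sub hT hp m, hTp] with ω hsub hω
    rw [show (fun ω => T ω - p ω) = T - p from rfl, hsub, Pi.sub_apply, hω,
      condExp_of_stronglyMeasurable hm hpm.stronglyMeasurable hp, Pi.zero_apply, sub_self]
  have hcorr : Integrable (fun ω => k ω * (T ω - p ω)) μ :=
    (hf.sub hg).congr (ae_of_all _ fun ω => by simp only [Pi.sub_apply, hgf]; ring)
  have hcorr_zero : ∫ ω, k ω * (T ω - p ω) ∂μ = 0 := by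
    rw [integral_mul_eq_of_condExp_ae_eq (h := fun ω => T ω - p ω) hm hkm.stronglyMeasurable
      (hT.sub hp) hcorr hcentered]
    simp
  rw [integral_congr_ae (ae_of_all _ hgf), integral_sub hf hcorr, hcorr_zero, sub_zero]

end ConditionalWeighting

theorem equivalence_three_bound_formulas
    {Ω : Type*} [F : MeasurableSpace Ω] (P : Measure Ω) [IsProbabilityMeasure P]
    (Z Y1 Y0 Y : Ω → ℝ)
    (hZmeas : Measurable Z) (hZ01 : ∀ ω, Z ω = 0 ∨ Z ω = 1)
    (hY1int : Integrable Y1 P) (hY0int : Integrable Y0 P)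
    (hYdef : ∀ ω, Y ω = Z ω * Y1 ω + (1 - Z ω) * Y0 ω)
    (mX : MeasurableSpace Ω) (hmX : mX ≤ F)
    (eX : Ω → ℝ) (heXmeas : Measurable[mX] eX) (heX : eX =ᵐ[P] P[Z|mX])
    (hov : ∀ᵐ ω ∂P, 0 < eX ω ∧ eX ω < 1)
    (mu1 mu0 : Ω → ℝ) (hmu1meas : Measurable[mX] mu1) (hmu0meas : Measurable[mX] mu0)
    (hmu1 : (fun ω => mu1 ω * eX ω) =ᵐ[P] P[fun ω => Z ω * Y ω|mX])
    (hmu0 : (fun ω => mu0 ω * (1 - eX ω)) =ᵐ[P] P[fun ω => (1 - Z ω) * Y ω|mX])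
    (a b : ℝ)
    (hint1 : Integrable (fun ω => Z ω * mu1 ω + (1 - Z ω) * mu1 ω / a) P)
    (hint2 : Integrable (fun ω => Z ω * mu0 ω * b + (1 - Z ω) * mu0 ω) P)
    (hint3 : Integrable (fun ω => (eX ω + (1 - eX ω) / a) * (Z ω * Y ω) / eX ω) P)
    (hint4 : Integrable
      (fun ω => (eX ω * b + 1 - eX ω) * ((1 - Z ω) * Y ω) / (1 - eX ω)) P)
    (hint5 : Integrable (fun ω => (eX ω + (1 - eX ω) / a) * (Z ω * Y ω) / eX ω
        - (Z ω - eX ω) * mu1 ω / (eX ω * a)) P)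
    (hint6 : Integrable (fun ω => (eX ω * b + 1 - eX ω) * ((1 - Z ω) * Y ω) / (1 - eX ω)
        - (eX ω - Z ω) * (mu0 ω * b) / (1 - eX ω)) P) :
    (∫ ω, (Z ω * mu1 ω + (1 - Z ω) * mu1 ω / a) ∂P
        - ∫ ω, (Z ω * mu0 ω * b + (1 - Z ω) * mu0 ω) ∂P
      = ∫ ω, (eX ω + (1 - eX ω) / a) * (Z ω * Y ω) / eX ω ∂P
        - ∫ ω, (eX ω * b + 1 - eX ω) * ((1 - Z ω) * Y ω) / (1 - eX ω) ∂P)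
    ∧ (∫ ω, (eX ω + (1 - eX ω) / a) * (Z ω * Y ω) / eX ω ∂P
        - ∫ ω, (eX ω * b + 1 - eX ω) * ((1 - Z ω) * Y ω) / (1 - eX ω) ∂P
      = ∫ ω, ((eX ω + (1 - eX ω) / a) * (Z ω * Y ω) / eX ω
            - (Z ω - eX ω) * mu1 ω / (eX ω * a)) ∂P
        - ∫ ω, ((eX ω * b + 1 - eX ω) * ((1 - Z ω) * Y ω) / (1 - eX ω)
            - (eX ω - Z ω) * (mu0 ω * b) / (1 - eX ω)) ∂P) := by
  have hZbd : ∀ ω, ‖Z ω‖ ≤ 1 := fun ω => by rcases hZ01 ω with h | h <;> simp [h]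
  have h1Zbd : ∀ ω, ‖1 - Z ω‖ ≤ 1 := fun ω => by rcases hZ01 ω with h | h <;> simp [h]
  have hZ : Integrable Z P :=
    (integrable_const 1).mono' hZmeas.aestronglyMeasurable (ae_of_all _ hZbd)
  have hZY : Integrable (fun ω => Z ω * Y ω) P :=
    (hY1int.bdd_mul hZmeas.aestronglyMeasurable (ae_of_all _ hZbd)).congr
      (ae_of_all _ fun ω => by rcases hZ01 ω with h | h <;> simp [hYdef, h])
  have h1ZY : Integrable (fun ω => (1 - Z ω) * Y ω) P :=
    (hY0int.bdd_mul (hZmeas.const_sub 1).aestronglyMeasurable (ae_of_all _ h1Zbd)).congr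
      (ae_of_all _ fun ω => by rcases hZ01 ω with h | h <;> simp [hYdef, h])
  have h1Zint : Integrable (fun ω => 1 - Z ω) P := (integrable_const 1).sub hZ
  have h1Z : P[fun ω => 1 - Z ω|mX] =ᵐ[P] fun ω => 1 - eX ω := by
    simpa [← sub_eq_add_neg] using condExp_const_add_const_mul_ae_eq hmX hZ heX.symm 1 (-1)
  have he0 : ∀ᵐ ω ∂P, eX ω ≠ 0 := hov.mono fun _ h => h.1.ne'
  have he1 : ∀ᵐ ω ∂P, 1 - eX ω ≠ 0 := hov.mono fun _ h => (sub_pos.2 h.2).ne'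
  refine ⟨?_, ?_⟩
  · rw [integral_regression_eq_integral_ipw hmX hZ heXmeas heX.symm he0 hmu1meas hmu1 hZY
        (c := 1 / a) (d := 1 - 1 / a) hint1 hint3 (fun ω => by ring) (fun ω => by ring),
      integral_regression_eq_integral_ipw hmX h1Zint (heXmeas.const_sub 1) h1Z he1 hmu0meas
        hmu0 h1ZY (c := b) (d := 1 - b) hint2 hint4 (fun ω => by ring) (fun ω => by ring)]
  · rw [integral_sub_mul_sub_condExp_eq hmX hZ heXmeas heX.symm
        (k := fun ω => mu1 ω / (eX ω * a)) (by fun_prop) hint3 hint5 (fun ω => by ring),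
      integral_sub_mul_sub_condExp_eq hmX h1Zint (heXmeas.const_sub 1) h1Z
        (k := fun ω => mu0 ω * b / (1 - eX ω)) (by fun_prop) hint4 hint6 (fun ω => by ring)]
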